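/- Let X be a topological space, E ⊆ X a subset, and τ : X → ℝ a continuous function that is unbounded on E (i.e. {|τ(x)| : x ∈ E} is unbounded). Then there exists an injective topological embedding e : ℕ → X with e(n) ∈ E for all n, whose image is C-embedded in X, and such that |τ(e(n))| → ∞ as n → ∞. -/

import Mathlib

/-!
Choose points `e n ∈ E` recursively with `|τ (e (n + 1))| ≥ |τ (e n)| + 1`. Then `n ↦ |τ (e n)|`
is a closed embedding of `ℕ` into `ℝ` tending to infinity, so `e` is an embedding, and a
continuous function on the image of `e` is a function of `|τ|` there, which extends from the
closed discrete set `{|τ (e n)|}` to all of `ℝ` by the Tietze extension theorem.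
-/

open Filter Set Topology

def IsCEmbedded {X : Type*} [TopologicalSpace X] (s : Set X) : Prop :=
  ∀ f : s → ℝ, Continuous f → ∃ F : X → ℝ, Continuous F ∧ ∀ d : s, F d = f d

theorem isCEmbedded_range_of_isClosedEmbedding_comp {ι X Y : Type*} [TopologicalSpace ι]
    [TopologicalSpace X] [TopologicalSpace Y] [NormalSpace Y] {e : ι → X} {φ : X → Y}
    (he : Continuous e) (hφ : Continuous φ) (h : IsClosedEmbedding (φ ∘ e)) :
    IsCEmbedded (range e) := by
  intro f hf
  obtain ⟨g, hg⟩ :=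
    ContinuousMap.exists_extension' h ⟨f ∘ rangeFactorization e, hf.comp he.rangeFactorization⟩
  refine ⟨g ∘ φ, g.continuous.comp hφ, ?_⟩
  rintro ⟨_, i, rfl⟩
  exact congrFun hg i

theorem exists_seq_mem_add_one_le_of_not_bddAbove {α : Type*} {E : Set α} {u : α → ℝ}
    (h : ¬BddAbove (u '' E)) :
    ∃ e : ℕ → α, (∀ n, e n ∈ E) ∧ ∀ n, u (e n) + 1 ≤ u (e (n + 1)) := by
  have hexists (B : ℝ) : ∃ x ∈ E, B < u x := by
    obtain ⟨_, ⟨x, hxE, rfl⟩, hBx⟩ := not_bddAbove_iff.1 h B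
    exact ⟨x, hxE, hBx⟩
  choose p hpE hpB using hexists
  let e : ℕ → α := fun n => Nat.rec (p 0) (fun _ x => p (u x + 1)) n
  refine ⟨e, fun n => ?_, fun n => (hpB _).le⟩
  cases n <;> exact hpE _

section AddOneLeSucc

variable {t : ℕ → ℝ}

theorem add_natCast_le_of_add_one_le_succ (ht : ∀ n, t n + 1 ≤ t (n + 1)) (m k : ℕ) :
    t m + k ≤ t (m + k) := by
  induction k with
  | zero => simp
  | succ k ih =>
    rw [Nat.cast_succ, ← add_assoc, ← Nat.add_assoc]
    linarith [ht (m + k)]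

theorem tendsto_atTop_of_add_one_le_succ (ht : ∀ n, t n + 1 ≤ t (n + 1)) :
    Tendsto t atTop atTop := by
  refine tendsto_atTop_mono (fun n => ?_)
    (tendsto_atTop_add_const_left _ (t 0) tendsto_natCast_atTop_atTop)
  simpa using add_natCast_le_of_add_one_le_succ ht 0 n

theorem isClosedEmbedding_of_add_one_le_succ (ht : ∀ n, t n + 1 ≤ t (n + 1)) :
    IsClosedEmbedding t := by
  have hlt {m n : ℕ} (hmn : m < n) : t m + 1 ≤ t n := by
    obtain ⟨k, rfl⟩ := Nat.exists_eq_add_of_lt hmn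
    have := add_natCast_le_of_add_one_le_succ ht (m + 1) k
    rw [Nat.add_right_comm] at this
    linarith [ht m, (Nat.cast_nonneg k : (0 : ℝ) ≤ k)]
  refine Metric.isClosedEmbedding_of_pairwise_le_dist zero_lt_one fun m n hmn => ?_
  show 1 ≤ |t m - t n|
  rcases hmn.lt_or_gt with h | h
  · rw [abs_sub_comm, abs_of_nonneg] <;> linarith [hlt h]
  · rw [abs_of_nonneg] <;> linarith [hlt h]

end AddOneLeSucc

/-- If `τ : X → ℝ` is continuous and unbounded on `E ⊆ X`, then there is an injective
topological embedding `e : ℕ → X` with values in `E`, whose image is C-embedded in `X`,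
and with `|τ (e n)| → ∞`. -/
theorem stmt12 (X : Type*) [TopologicalSpace X] (E : Set X) (τ : X → ℝ)
    (hτ : Continuous τ) (hub : ¬ BddAbove ((fun x => |τ x|) '' E)) :
    ∃ e : ℕ → X, Topology.IsEmbedding e ∧ (∀ n : ℕ, e n ∈ E) ∧
      (∀ f : Set.range e → ℝ, Continuous f →
        ∃ F : X → ℝ, Continuous F ∧ ∀ d : Set.range e, F (d : X) = f d) ∧
      Filter.Tendsto (fun n : ℕ => |τ (e n)|) Filter.atTop Filter.atTop := by
  obtain ⟨e, heE, hstep⟩ := exists_seq_mem_add_one_le_of_not_bddAbove hub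
  have hclosed : IsClosedEmbedding ((fun x => |τ x|) ∘ e) :=
    isClosedEmbedding_of_add_one_le_succ hstep
  have he : Continuous e := continuous_of_discreteTopology
  refine ⟨e, hclosed.isEmbedding.of_comp he hτ.abs, heE, ?_,
    tendsto_atTop_of_add_one_le_succ hstep⟩
  exact isCEmbedded_range_of_isClosedEmbedding_comp he hτ.abs hclosed
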